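/- The framed Drinfeld–Kohno Lie algebra 𝔣𝔱ₙ is isomorphic to the Lie algebra presented by generators t_{ij} = t_{ji}, 0 ≤ i, j ≤ n, subject to [t_{ij}, t_{kl}] = 0 for {i,j}∩{k,l} = ∅ and the residue relations Σ_{i=0}^{n} t_{ij} = 0 for each j; the isomorphism eliminates t_{0j} and the diagonal generators t_{ii} using the residue relations. -/

import Mathlib

open FreeLieAlgebra

/-- Defining relations of the framed Drinfeld–Kohno Lie algebra 𝔣𝔱ₙ (generators out of
the range `1 ≤ i, j ≤ n` are set to zero). -/
def ftRels (k : Type) [Field k] (n : ℕ) : Set (FreeLieAlgebra k (ℕ × ℕ)) :=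
  { x | (∃ i j : ℕ, x = of k (i, j) - of k (j, i)) ∨
        (∃ i j : ℕ, ¬(1 ≤ i ∧ i ≤ n ∧ 1 ≤ j ∧ j ≤ n) ∧ x = of k (i, j)) ∨
        (∃ i j l m : ℕ, i ≠ l ∧ i ≠ m ∧ j ≠ l ∧ j ≠ m ∧ x = ⁅of k (i, j), of k (l, m)⁆) ∨
        (∃ i j l : ℕ, i ≠ j ∧ j ≠ l ∧ i ≠ l ∧ x = ⁅of k (i, j), of k (l, i) + of k (l, j)⁆) ∨
        (∃ i j l : ℕ, x = ⁅of k (i, i), of k (j, l)⁆) }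

noncomputable def ftIdeal (k : Type) [Field k] (n : ℕ) : LieIdeal k (FreeLieAlgebra k (ℕ × ℕ)) :=
  LieSubmodule.lieSpan k _ (ftRels k n)

/-- The framed Drinfeld–Kohno Lie algebra 𝔣𝔱ₙ. -/
abbrev ft (k : Type) [Field k] (n : ℕ) := FreeLieAlgebra k (ℕ × ℕ) ⧸ ftIdeal k n

noncomputable def ftGen (k : Type) [Field k] (n : ℕ) (i j : ℕ) : ft k n :=
  LieSubmodule.Quotient.mk' (ftIdeal k n) (of k (i, j))

/-- The spherical ('cyclic') presentation: generators `t_{ij} = t_{ji}` for `0 ≤ i, j ≤ n`,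
with `[t_{ij}, t_{kl}] = 0` for disjoint index pairs and the residue relations
`Σ_{i=0}^n t_{ij} = 0` for each `j`. -/
def sphRels (k : Type) [Field k] (n : ℕ) : Set (FreeLieAlgebra k (ℕ × ℕ)) :=
  { x | (∃ i j : ℕ, x = of k (i, j) - of k (j, i)) ∨
        (∃ i j : ℕ, ¬(i ≤ n ∧ j ≤ n) ∧ x = of k (i, j)) ∨
        (∃ i j l m : ℕ, i ≠ l ∧ i ≠ m ∧ j ≠ l ∧ j ≠ m ∧ x = ⁅of k (i, j), of k (l, m)⁆) ∨
        (∃ j : ℕ, j ≤ n ∧ x = ∑ i ∈ Finset.range (n + 1), of k (i, j)) }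

noncomputable def sphIdeal (k : Type) [Field k] (n : ℕ) :
    LieIdeal k (FreeLieAlgebra k (ℕ × ℕ)) :=
  LieSubmodule.lieSpan k _ (sphRels k n)

/-- The Lie algebra given by the spherical presentation of 𝔣𝔱ₙ. -/
abbrev sph (k : Type) [Field k] (n : ℕ) := FreeLieAlgebra k (ℕ × ℕ) ⧸ sphIdeal k n

noncomputable def sphGen (k : Type) [Field k] (n : ℕ) (i j : ℕ) : sph k n :=
  LieSubmodule.Quotient.mk' (sphIdeal k n) (of k (i, j))

section QuotLift
variable {k : Type} [Field k]

noncomputable def quotLift {L M : Type*} [LieRing L] [LieAlgebra k L] [LieRing M] [LieAlgebra k M]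
    (I : LieIdeal k L) (f : L →ₗ⁅k⁆ M) (h : ∀ x ∈ I, f x = 0) : (L ⧸ I) →ₗ⁅k⁆ M :=
  { Submodule.liftQ I.toSubmodule f.toLinearMap (fun x hx => by simpa using h x hx) with
    map_lie' := by
      rintro ⟨x⟩ ⟨y⟩
      exact f.map_lie x y }

@[simp] lemma quotLift_mk {L M : Type*} [LieRing L] [LieAlgebra k L] [LieRing M] [LieAlgebra k M]
    (I : LieIdeal k L) (f : L →ₗ⁅k⁆ M) (h : ∀ x ∈ I, f x = 0) (x : L) :
    quotLift I f h (LieSubmodule.Quotient.mk' I x) = f x := rfl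

noncomputable def quotMkHom {L : Type*} [LieRing L] [LieAlgebra k L] (I : LieIdeal k L) :
    L →ₗ⁅k⁆ L ⧸ I :=
  { I.toSubmodule.mkQ with map_lie' := fun {_ _} => rfl }

lemma quot_hom_ext {X M : Type*} [LieRing M] [LieAlgebra k M]
    {I : LieIdeal k (FreeLieAlgebra k X)} {F G : (FreeLieAlgebra k X ⧸ I) →ₗ⁅k⁆ M}
    (h : ∀ x, F (LieSubmodule.Quotient.mk' I (of k x)) = G (LieSubmodule.Quotient.mk' I (of k x))) :
    F = G := by
  have h2 : F.comp (quotMkHom I) = G.comp (quotMkHom I) := FreeLieAlgebra.hom_ext h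
  exact LieHom.ext fun q => Quotient.inductionOn' q fun a => LieHom.congr_fun h2 a

end QuotLift

section Main
variable (k : Type) [Field k] (n : ℕ)

noncomputable def ftMk : FreeLieAlgebra k (ℕ × ℕ) →ₗ⁅k⁆ ft k n := quotMkHom (ftIdeal k n)
noncomputable def sphMk : FreeLieAlgebra k (ℕ × ℕ) →ₗ⁅k⁆ sph k n := quotMkHom (sphIdeal k n)

lemma ftGen_eq (i j : ℕ) : ftGen k n i j = ftMk k n (of k (i, j)) := rfl
lemma sphGen_eq (i j : ℕ) : sphGen k n i j = sphMk k n (of k (i, j)) := rfl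

lemma ft_rel_zero {x : FreeLieAlgebra k (ℕ × ℕ)} (hx : x ∈ ftRels k n) : ftMk k n x = 0 := by
  show LieSubmodule.Quotient.mk' (ftIdeal k n) x = 0
  exact (LieSubmodule.Quotient.mk_eq_zero _).2 (LieSubmodule.subset_lieSpan hx)

lemma sph_rel_zero {x : FreeLieAlgebra k (ℕ × ℕ)} (hx : x ∈ sphRels k n) : sphMk k n x = 0 := by
  show LieSubmodule.Quotient.mk' (sphIdeal k n) x = 0
  exact (LieSubmodule.Quotient.mk_eq_zero _).2 (LieSubmodule.subset_lieSpan hx)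

lemma ft_symm (i j : ℕ) : ftGen k n i j = ftGen k n j i := by
  have := ft_rel_zero k n (x := of k (i, j) - of k (j, i)) (Or.inl ⟨i, j, rfl⟩)
  rw [map_sub, sub_eq_zero] at this
  exact this

lemma ft_out {i j : ℕ} (h : ¬(1 ≤ i ∧ i ≤ n ∧ 1 ≤ j ∧ j ≤ n)) : ftGen k n i j = 0 :=
  ft_rel_zero k n (Or.inr (Or.inl ⟨i, j, h, rfl⟩))

lemma ft_disj {i j l m : ℕ} (h1 : i ≠ l) (h2 : i ≠ m) (h3 : j ≠ l) (h4 : j ≠ m) :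
    ⁅ftGen k n i j, ftGen k n l m⁆ = 0 := by
  have := ft_rel_zero k n (Or.inr (Or.inr (Or.inl ⟨i, j, l, m, h1, h2, h3, h4, rfl⟩)))
  rw [LieHom.map_lie] at this
  exact this

lemma ft_4T {i j l : ℕ} (h1 : i ≠ j) (h2 : j ≠ l) (h3 : i ≠ l) :
    ⁅ftGen k n i j, ftGen k n l i + ftGen k n l j⁆ = 0 := by
  have := ft_rel_zero k n (Or.inr (Or.inr (Or.inr (Or.inl ⟨i, j, l, h1, h2, h3, rfl⟩))))
  rw [LieHom.map_lie, map_add] at this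
  exact this

lemma ft_central (i j l : ℕ) : ⁅ftGen k n i i, ftGen k n j l⁆ = 0 := by
  have := ft_rel_zero k n (Or.inr (Or.inr (Or.inr (Or.inr ⟨i, j, l, rfl⟩))))
  rw [LieHom.map_lie] at this
  exact this

lemma sph_symm (i j : ℕ) : sphGen k n i j = sphGen k n j i := by
  have := sph_rel_zero k n (x := of k (i, j) - of k (j, i)) (Or.inl ⟨i, j, rfl⟩)
  rw [map_sub, sub_eq_zero] at this
  exact this

lemma sph_out {i j : ℕ} (h : ¬(i ≤ n ∧ j ≤ n)) : sphGen k n i j = 0 :=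
  sph_rel_zero k n (Or.inr (Or.inl ⟨i, j, h, rfl⟩))

lemma sph_disj {i j l m : ℕ} (h1 : i ≠ l) (h2 : i ≠ m) (h3 : j ≠ l) (h4 : j ≠ m) :
    ⁅sphGen k n i j, sphGen k n l m⁆ = 0 := by
  have := sph_rel_zero k n (Or.inr (Or.inr (Or.inl ⟨i, j, l, m, h1, h2, h3, h4, rfl⟩)))
  rw [LieHom.map_lie] at this
  exact this

lemma sph_res {j : ℕ} (hj : j ≤ n) :
    ∑ i ∈ Finset.range (n + 1), sphGen k n i j = 0 := by
  have := sph_rel_zero k n (Or.inr (Or.inr (Or.inr ⟨j, hj, rfl⟩)))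
  rw [← LieHom.coe_toLinearMap, map_sum] at this
  simp only [LieHom.coe_toLinearMap] at this
  exact this

lemma range_succ_eq_insert : Finset.range (n + 1) = insert 0 (Finset.Icc 1 n) := by
  ext x; simp [Finset.mem_range, Finset.mem_Icc]; omega

lemma sph_res' {j : ℕ} (hj : j ≤ n) :
    sphGen k n 0 j = -∑ i ∈ Finset.Icc 1 n, sphGen k n i j := by
  have h := sph_res k n hj
  rw [range_succ_eq_insert, Finset.sum_insert (by simp)] at h
  linear_combination (norm := module) h


lemma sum_lie' {L : Type*} [LieRing L] (s : Finset ℕ) (f : ℕ → L) (y : L) :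
    ⁅∑ i ∈ s, f i, y⁆ = ∑ i ∈ s, ⁅f i, y⁆ := by
  induction s using Finset.cons_induction with
  | empty => simp
  | cons a s ha ih => simp [Finset.sum_insert ha, add_lie, ih]

lemma lie_sum' {L : Type*} [LieRing L] (s : Finset ℕ) (f : ℕ → L) (y : L) :
    ⁅y, ∑ i ∈ s, f i⁆ = ∑ i ∈ s, ⁅y, f i⁆ := by
  induction s using Finset.cons_induction with
  | empty => simp
  | cons a s ha ih => simp [Finset.sum_insert ha, lie_add, ih]

lemma sum_eq_pair {M : Type*} [AddCommGroup M] {s : Finset ℕ} {a b : ℕ} (hab : a ≠ b)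
    (ha : a ∈ s) (hb : b ∈ s) (f : ℕ → M) (hf : ∀ x ∈ s, x ≠ a → x ≠ b → f x = 0) :
    ∑ x ∈ s, f x = f a + f b := by
  rw [← Finset.sum_subset (s₁ := ({a, b} : Finset ℕ))
      (by intro x hx; simp only [Finset.mem_insert, Finset.mem_singleton] at hx
          rcases hx with h | h <;> subst h <;> assumption)
      (fun x hx hx' => hf x hx (by simp at hx'; tauto) (by simp at hx'; tauto))]
  rw [Finset.sum_pair hab]

lemma sph_4T {a b c : ℕ} (ha1 : 1 ≤ a) (ha2 : a ≤ n) (hb1 : 1 ≤ b) (hb2 : b ≤ n)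
    (hc1 : 1 ≤ c) (hc2 : c ≤ n) (hab : a ≠ b) (hbc : b ≠ c) (hac : a ≠ c) :
    ⁅sphGen k n a b, sphGen k n c a + sphGen k n c b⁆ = 0 := by
  have h0 : ⁅sphGen k n 0 c, sphGen k n a b⁆ = 0 :=
    sph_disj k n (by omega) (by omega) (Ne.symm hac) (Ne.symm hbc)
  rw [sph_res' k n hc2, neg_lie, neg_eq_zero, sum_lie'] at h0
  rw [sum_eq_pair hab (Finset.mem_Icc.2 ⟨ha1, ha2⟩) (Finset.mem_Icc.2 ⟨hb1, hb2⟩)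
      (fun p => ⁅sphGen k n p c, sphGen k n a b⁆)
      (fun p _ hpa hpb => sph_disj k n hpa hpb (Ne.symm hac) (Ne.symm hbc))] at h0
  rw [lie_add, sph_symm k n c a, sph_symm k n c b]
  have e1 : -⁅sphGen k n a c, sphGen k n a b⁆ = ⁅sphGen k n a b, sphGen k n a c⁆ := lie_skew _ _
  have e2 : -⁅sphGen k n b c, sphGen k n a b⁆ = ⁅sphGen k n a b, sphGen k n b c⁆ := lie_skew _ _
  linear_combination (norm := module) -e1 - e2 - h0

lemma sph_central' {a l : ℕ} (ha1 : 1 ≤ a) (ha2 : a ≤ n) (hl2 : l ≤ n) (hal : a ≠ l) :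
    ⁅sphGen k n a l, sphGen k n a a⁆ = 0 := by
  have h0 : ⁅sphGen k n 0 l, sphGen k n a a⁆ = 0 :=
    sph_disj k n (by omega) (by omega) (Ne.symm hal) (Ne.symm hal)
  rw [sph_res' k n hl2, neg_lie, neg_eq_zero, sum_lie'] at h0
  rw [Finset.sum_eq_single_of_mem a (Finset.mem_Icc.2 ⟨ha1, ha2⟩)
      (fun p _ hpa => sph_disj k n hpa hpa (Ne.symm hal) (Ne.symm hal))] at h0
  exact h0

noncomputable def EE (i : ℕ) (f : ℕ → ft k n) : ft k n :=
  if i = 0 then -∑ m ∈ Finset.Icc 1 n, f m else if i ≤ n then f i else 0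

lemma EE_lie (i : ℕ) (f : ℕ → ft k n) (y : ft k n) :
    ⁅EE k n i f, y⁆ = EE k n i fun a => ⁅f a, y⁆ := by
  unfold EE; split_ifs <;> simp [sum_lie']

lemma EE_lie_r (i : ℕ) (f : ℕ → ft k n) (y : ft k n) :
    ⁅y, EE k n i f⁆ = EE k n i fun a => ⁅y, f a⁆ := by
  unfold EE; split_ifs <;> simp [lie_sum']

lemma EE_zero (i : ℕ) : EE k n i (fun _ => 0) = 0 := by
  unfold EE; split_ifs <;> simp

lemma EE_swap (i j : ℕ) (g : ℕ → ℕ → ft k n) :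
    EE k n i (fun a => EE k n j fun b => g a b) = EE k n j (fun b => EE k n i fun a => g a b) := by
  unfold EE
  split_ifs <;> simp <;> rw [Finset.sum_comm]


noncomputable def FF (i j : ℕ) : ft k n :=
  EE k n i fun a => EE k n j fun b => ftGen k n a b

lemma FF_in {i j : ℕ} (hi1 : 1 ≤ i) (hi2 : i ≤ n) (hj1 : 1 ≤ j) (hj2 : j ≤ n) :
    FF k n i j = ftGen k n i j := by
  have hi0 : ¬ i = 0 := by omega
  have hj0 : ¬ j = 0 := by omega
  simp [FF, EE, hi0, hi2, hj0, hj2]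

lemma FF_0j {j : ℕ} (hj1 : 1 ≤ j) (hj2 : j ≤ n) :
    FF k n 0 j = -∑ a ∈ Finset.Icc 1 n, ftGen k n a j := by
  have hj0 : ¬ j = 0 := by omega
  simp [FF, EE, hj0, hj2]

lemma FF_i0 {i : ℕ} (hi1 : 1 ≤ i) (hi2 : i ≤ n) :
    FF k n i 0 = -∑ b ∈ Finset.Icc 1 n, ftGen k n i b := by
  have hi0 : ¬ i = 0 := by omega
  simp [FF, EE, hi0, hi2]

lemma FF_00 : FF k n 0 0 = ∑ a ∈ Finset.Icc 1 n, ∑ b ∈ Finset.Icc 1 n, ftGen k n a b := by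
  simp [FF, EE]

lemma FF_out (hn : 1 ≤ n) {i j : ℕ} (h : n < i ∨ n < j) : FF k n i j = 0 := by
  rcases h with h | h
  · have hi0 : ¬ i = 0 := by omega
    have hi2 : ¬ i ≤ n := by omega
    simp [FF, EE, hi0, hi2]
  · have hj0 : ¬ j = 0 := by omega
    have hj2 : ¬ j ≤ n := by omega
    simp [FF, EE, hj0, hj2]

lemma FF_symm (i j : ℕ) : FF k n i j = FF k n j i := by
  have hcongr : (fun a => EE k n j fun b => ftGen k n a b)
      = (fun a => EE k n j fun b => ftGen k n b a) := by
    funext a; congr 1; funext b; exact ft_symm k n a b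
  rw [FF, hcongr, EE_swap]
  rfl

lemma L1 {b l m : ℕ} (hl1 : 1 ≤ l) (hl2 : l ≤ n) (hm1 : 1 ≤ m) (hm2 : m ≤ n)
    (hbl : b ≠ l) (hbm : b ≠ m) :
    ∑ a ∈ Finset.Icc 1 n, ⁅ftGen k n a b, ftGen k n l m⁆ = 0 := by
  rcases eq_or_ne l m with rfl | hlm
  · apply Finset.sum_eq_zero
    intro a _
    rcases eq_or_ne a l with rfl | hal
    · rw [← lie_skew, ft_central, neg_zero]
    · exact ft_disj k n hal hal hbl hbl
  · rw [sum_eq_pair hlm (Finset.mem_Icc.2 ⟨hl1, hl2⟩) (Finset.mem_Icc.2 ⟨hm1, hm2⟩) _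
      (fun a _ hal ham => ft_disj k n hal ham hbl hbm)]
    have h4 := ft_4T k n hlm (Ne.symm hbm) (Ne.symm hbl)
    rw [ft_symm k n b l, ft_symm k n b m, lie_add] at h4
    have e1 : -⁅ftGen k n l m, ftGen k n l b⁆ = ⁅ftGen k n l b, ftGen k n l m⁆ := lie_skew _ _
    have e2 : -⁅ftGen k n l m, ftGen k n m b⁆ = ⁅ftGen k n m b, ftGen k n l m⁆ := lie_skew _ _
    linear_combination (norm := module) -e1 - e2 - h4

lemma L1' {i l m : ℕ} (hl1 : 1 ≤ l) (hl2 : l ≤ n) (hm1 : 1 ≤ m) (hm2 : m ≤ n)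
    (hil : i ≠ l) (him : i ≠ m) :
    ∑ b ∈ Finset.Icc 1 n, ⁅ftGen k n i b, ftGen k n l m⁆ = 0 := by
  rw [Finset.sum_congr rfl (fun b _ => by rw [ft_symm k n i b])]
  exact L1 k n hl1 hl2 hm1 hm2 hil him

lemma L2 {l m : ℕ} (hl1 : 1 ≤ l) (hl2 : l ≤ n) (hm1 : 1 ≤ m) (hm2 : m ≤ n) :
    ∑ b ∈ Finset.Icc 1 n, ∑ a ∈ Finset.Icc 1 n, ⁅ftGen k n a b, ftGen k n l m⁆ = 0 := by
  rcases eq_or_ne l m with rfl | hlm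
  · apply Finset.sum_eq_zero
    intro b _
    apply Finset.sum_eq_zero
    intro a _
    rw [← lie_skew, ft_central, neg_zero]
  · rw [sum_eq_pair hlm (Finset.mem_Icc.2 ⟨hl1, hl2⟩) (Finset.mem_Icc.2 ⟨hm1, hm2⟩) _
      (fun b _ hbl hbm => L1 k n hl1 hl2 hm1 hm2 hbl hbm)]
    rw [← Finset.sum_add_distrib]
    apply Finset.sum_eq_zero
    intro a _
    rcases eq_or_ne a l with rfl | hal
    · simp [ft_central, lie_self]
    rcases eq_or_ne a m with ham | ham
    · rw [ham, ft_symm k n m l]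
      simp [ft_central, lie_self]
    · have h4 := ft_4T k n hlm (Ne.symm ham) (Ne.symm hal)
      rw [lie_add] at h4
      have e1 : -⁅ftGen k n l m, ftGen k n a l⁆ = ⁅ftGen k n a l, ftGen k n l m⁆ := lie_skew _ _
      have e2 : -⁅ftGen k n l m, ftGen k n a m⁆ = ⁅ftGen k n a m, ftGen k n l m⁆ := lie_skew _ _
      linear_combination (norm := module) -e1 - e2 - h4


noncomputable def phi0 : FreeLieAlgebra k (ℕ × ℕ) →ₗ⁅k⁆ sph k n :=
  FreeLieAlgebra.lift k fun p =>
    if 1 ≤ p.1 ∧ p.1 ≤ n ∧ 1 ≤ p.2 ∧ p.2 ≤ n then sphGen k n p.1 p.2 else 0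

lemma phi0_of (i j : ℕ) :
    phi0 k n (of k (i, j)) =
      if 1 ≤ i ∧ i ≤ n ∧ 1 ≤ j ∧ j ≤ n then sphGen k n i j else 0 :=
  FreeLieAlgebra.lift_of_apply _ _

lemma phi0_vanish : ∀ x ∈ ftIdeal k n, phi0 k n x = 0 := by
  have hle : ftIdeal k n ≤ (phi0 k n).ker := by
    rw [ftIdeal, LieSubmodule.lieSpan_le]
    intro x hx
    rw [SetLike.mem_coe, LieHom.mem_ker]
    rcases hx with ⟨i, j, rfl⟩ | ⟨i, j, h, rfl⟩ | ⟨i, j, l, m, h1, h2, h3, h4, rfl⟩ |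
      ⟨i, j, l, h1, h2, h3, rfl⟩ | ⟨i, j, l, rfl⟩
    · rw [map_sub, phi0_of, phi0_of]
      by_cases hp : 1 ≤ i ∧ i ≤ n ∧ 1 ≤ j ∧ j ≤ n
      · rw [if_pos hp, if_pos (by tauto), sub_eq_zero]
        exact sph_symm k n i j
      · rw [if_neg hp, if_neg (by tauto), sub_zero]
    · rw [phi0_of, if_neg h]
    · rw [LieHom.map_lie, phi0_of, phi0_of]
      by_cases hp : 1 ≤ i ∧ i ≤ n ∧ 1 ≤ j ∧ j ≤ n
      · by_cases hq : 1 ≤ l ∧ l ≤ n ∧ 1 ≤ m ∧ m ≤ n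
        · rw [if_pos hp, if_pos hq]
          exact sph_disj k n h1 h2 h3 h4
        · rw [if_neg hq, lie_zero]
      · rw [if_neg hp, zero_lie]
    · rw [LieHom.map_lie, map_add, phi0_of, phi0_of, phi0_of]
      by_cases hp : 1 ≤ i ∧ i ≤ n ∧ 1 ≤ j ∧ j ≤ n
      · by_cases hl : 1 ≤ l ∧ l ≤ n
        · rw [if_pos hp, if_pos (by tauto), if_pos (by tauto)]
          exact sph_4T k n hp.1 hp.2.1 hp.2.2.1 hp.2.2.2 hl.1 hl.2 h1 h2 h3
        · rw [if_pos hp, if_neg (fun hc => hl ⟨hc.1, hc.2.1⟩),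
            if_neg (fun hc => hl ⟨hc.1, hc.2.1⟩), add_zero, lie_zero]
      · rw [if_neg hp, zero_lie]
    · rw [LieHom.map_lie, phi0_of, phi0_of]
      by_cases hp : 1 ≤ i ∧ i ≤ n
      · by_cases hq : 1 ≤ j ∧ j ≤ n ∧ 1 ≤ l ∧ l ≤ n
        · rw [if_pos (by tauto), if_pos hq]
          rcases eq_or_ne i j with rfl | hij
          · rcases eq_or_ne i l with rfl | hil
            · exact lie_self _
            · rw [← lie_skew, sph_central' k n hp.1 hp.2 hq.2.2.2 hil, neg_zero]
          · rcases eq_or_ne i l with hil | hil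
            · rw [sph_symm k n j l, ← hil, ← lie_skew,
                sph_central' k n hp.1 hp.2 hq.2.1 hij, neg_zero]
            · exact sph_disj k n hij hil hij hil
        · rw [if_neg hq, lie_zero]
      · rw [if_neg (by tauto), zero_lie]
  exact fun x hx => LieHom.mem_ker.1 (hle hx)

noncomputable def psi0 : FreeLieAlgebra k (ℕ × ℕ) →ₗ⁅k⁆ ft k n :=
  FreeLieAlgebra.lift k fun p => FF k n p.1 p.2

lemma psi0_of (i j : ℕ) : psi0 k n (of k (i, j)) = FF k n i j :=
  FreeLieAlgebra.lift_of_apply _ _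

lemma psi_disj_main (hn : 1 ≤ n) {i j l m : ℕ} (hi : i ≤ n) (hj : j ≤ n)
    (hl1 : 1 ≤ l) (hl2 : l ≤ n) (hm1 : 1 ≤ m) (hm2 : m ≤ n)
    (h1 : i ≠ l) (h2 : i ≠ m) (h3 : j ≠ l) (h4 : j ≠ m) :
    ⁅FF k n i j, ftGen k n l m⁆ = 0 := by
  rcases Nat.eq_zero_or_pos i with rfl | hi1
  · rcases Nat.eq_zero_or_pos j with rfl | hj1
    · rw [FF_00, sum_lie']
      rw [Finset.sum_congr rfl fun a _ => sum_lie' _ _ _]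
      rw [Finset.sum_comm]
      exact L2 k n hl1 hl2 hm1 hm2
    · rw [FF_0j k n hj1 hj, neg_lie, sum_lie', L1 k n hl1 hl2 hm1 hm2 h3 h4, neg_zero]
  · rcases Nat.eq_zero_or_pos j with rfl | hj1
    · rw [FF_i0 k n hi1 hi, neg_lie, sum_lie', L1' k n hl1 hl2 hm1 hm2 h1 h2, neg_zero]
    · rw [FF_in k n hi1 hi hj1 hj]
      exact ft_disj k n h1 h2 h3 h4

lemma psi_disj (hn : 1 ≤ n) {i j l m : ℕ} (h1 : i ≠ l) (h2 : i ≠ m) (h3 : j ≠ l) (h4 : j ≠ m) :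
    ⁅FF k n i j, FF k n l m⁆ = 0 := by
  by_cases hij : i ≤ n ∧ j ≤ n
  · by_cases hlm : l ≤ n ∧ m ≤ n
    · by_cases hl0 : 1 ≤ l ∧ 1 ≤ m
      · rw [FF_in k n hl0.1 hlm.1 hl0.2 hlm.2]
        exact psi_disj_main k n hn hij.1 hij.2 hl0.1 hlm.1 hl0.2 hlm.2 h1 h2 h3 h4
      · have hi1 : 1 ≤ i := by omega
        have hj1 : 1 ≤ j := by omega
        rw [← lie_skew, FF_in k n hi1 hij.1 hj1 hij.2,
          psi_disj_main k n hn hlm.1 hlm.2 hi1 hij.1 hj1 hij.2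
            (Ne.symm h1) (Ne.symm h3) (Ne.symm h2) (Ne.symm h4), neg_zero]
    · rw [FF_out k n hn (i := l) (j := m) (by omega), lie_zero]
  · rw [FF_out k n hn (i := i) (j := j) (by omega), zero_lie]

lemma psi0_vanish (hn : 1 ≤ n) : ∀ x ∈ sphIdeal k n, psi0 k n x = 0 := by
  have hle : sphIdeal k n ≤ (psi0 k n).ker := by
    rw [sphIdeal, LieSubmodule.lieSpan_le]
    intro x hx
    rw [SetLike.mem_coe, LieHom.mem_ker]
    rcases hx with ⟨i, j, rfl⟩ | ⟨i, j, h, rfl⟩ | ⟨i, j, l, m, h1, h2, h3, h4, rfl⟩ |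
      ⟨j, hj, rfl⟩
    · rw [map_sub, psi0_of, psi0_of, FF_symm, sub_self]
    · rw [psi0_of, FF_out k n hn (by omega)]
    · rw [LieHom.map_lie, psi0_of, psi0_of]
      exact psi_disj k n hn h1 h2 h3 h4
    · rw [← LieHom.coe_toLinearMap, map_sum]
      simp only [LieHom.coe_toLinearMap, psi0_of]
      rw [range_succ_eq_insert, Finset.sum_insert (by simp)]
      rcases Nat.eq_zero_or_pos j with rfl | hj1
      · rw [FF_00]
        rw [Finset.sum_congr rfl fun i hi => FF_i0 k n (Finset.mem_Icc.1 hi).1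
          (Finset.mem_Icc.1 hi).2]
        simp
      · rw [FF_0j k n hj1 hj]
        rw [Finset.sum_congr rfl fun i hi => FF_in k n (Finset.mem_Icc.1 hi).1
          (Finset.mem_Icc.1 hi).2 hj1 hj]
        simp
  exact fun x hx => LieHom.mem_ker.1 (hle hx)


noncomputable def Phi : ft k n →ₗ⁅k⁆ sph k n :=
  quotLift (ftIdeal k n) (phi0 k n) (phi0_vanish k n)

noncomputable def Psi (hn : 1 ≤ n) : sph k n →ₗ⁅k⁆ ft k n :=
  quotLift (sphIdeal k n) (psi0 k n) (psi0_vanish k n hn)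

lemma Phi_gen (i j : ℕ) :
    Phi k n (ftGen k n i j) =
      if 1 ≤ i ∧ i ≤ n ∧ 1 ≤ j ∧ j ≤ n then sphGen k n i j else 0 := by
  show quotLift _ _ _ (LieSubmodule.Quotient.mk' (ftIdeal k n) (of k (i, j))) = _
  rw [quotLift_mk, phi0_of]

lemma Psi_gen (hn : 1 ≤ n) (i j : ℕ) : Psi k n hn (sphGen k n i j) = FF k n i j := by
  show quotLift _ _ _ (LieSubmodule.Quotient.mk' (sphIdeal k n) (of k (i, j))) = _
  rw [quotLift_mk, psi0_of]

lemma left_inv' (hn : 1 ≤ n) : ∀ q : ft k n, Psi k n hn (Phi k n q) = q := by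
  have h : (Psi k n hn).comp (Phi k n) = LieHom.id := by
    apply quot_hom_ext
    rintro ⟨i, j⟩
    show Psi k n hn (Phi k n (ftGen k n i j)) = ftGen k n i j
    rw [Phi_gen]
    by_cases hp : 1 ≤ i ∧ i ≤ n ∧ 1 ≤ j ∧ j ≤ n
    · rw [if_pos hp, Psi_gen, FF_in k n hp.1 hp.2.1 hp.2.2.1 hp.2.2.2]
    · rw [if_neg hp, map_zero, ft_out k n hp]
  exact fun q => LieHom.congr_fun h q

lemma Phi_FF (hn : 1 ≤ n) (i j : ℕ) : Phi k n (FF k n i j) = sphGen k n i j := by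
  by_cases hi : i ≤ n
  · by_cases hj : j ≤ n
    · rcases Nat.eq_zero_or_pos i with rfl | hi1
      · rcases Nat.eq_zero_or_pos j with rfl | hj1
        · rw [FF_00, ← LieHom.coe_toLinearMap, map_sum]
          simp only [map_sum, LieHom.coe_toLinearMap]
          rw [Finset.sum_congr rfl fun a ha => Finset.sum_congr rfl fun b hb => by
            rw [Phi_gen, if_pos ⟨(Finset.mem_Icc.1 ha).1, (Finset.mem_Icc.1 ha).2,
              (Finset.mem_Icc.1 hb).1, (Finset.mem_Icc.1 hb).2⟩]]
          rw [Finset.sum_congr rfl fun a ha => Finset.sum_congr rfl fun b _ =>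
            sph_symm k n a b]
          rw [Finset.sum_congr rfl fun a ha =>
            show ∑ b ∈ Finset.Icc 1 n, sphGen k n b a = -sphGen k n 0 a from by
              have h := sph_res' k n (Finset.mem_Icc.1 ha).2
              linear_combination (norm := module) h]
          rw [Finset.sum_neg_distrib]
          rw [Finset.sum_congr rfl fun a _ => sph_symm k n 0 a]
          exact (sph_res' k n (Nat.zero_le n)).symm
        · rw [FF_0j k n hj1 hj, map_neg, ← LieHom.coe_toLinearMap, map_sum]
          simp only [LieHom.coe_toLinearMap]
          rw [Finset.sum_congr rfl fun a ha => by
            rw [Phi_gen, if_pos ⟨(Finset.mem_Icc.1 ha).1, (Finset.mem_Icc.1 ha).2, hj1, hj⟩]]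
          exact (sph_res' k n hj).symm
      · rcases Nat.eq_zero_or_pos j with rfl | hj1
        · rw [FF_i0 k n hi1 hi, map_neg, ← LieHom.coe_toLinearMap, map_sum]
          simp only [LieHom.coe_toLinearMap]
          rw [Finset.sum_congr rfl fun b hb => by
            rw [Phi_gen, if_pos ⟨hi1, hi, (Finset.mem_Icc.1 hb).1, (Finset.mem_Icc.1 hb).2⟩]]
          rw [Finset.sum_congr rfl fun b _ => sph_symm k n i b]
          rw [← sph_res' k n hi, sph_symm k n i 0]
        · rw [FF_in k n hi1 hi hj1 hj, Phi_gen, if_pos ⟨hi1, hi, hj1, hj⟩]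
    · rw [FF_out k n hn (Or.inr (by omega)), map_zero,
        sph_out k n (by tauto)]
  · rw [FF_out k n hn (Or.inl (by omega)), map_zero,
      sph_out k n (by tauto)]

lemma right_inv' (hn : 1 ≤ n) : ∀ q : sph k n, Phi k n (Psi k n hn q) = q := by
  have h : (Phi k n).comp (Psi k n hn) = LieHom.id := by
    apply quot_hom_ext
    rintro ⟨i, j⟩
    show Phi k n (Psi k n hn (sphGen k n i j)) = sphGen k n i j
    rw [Psi_gen, Phi_FF k n hn]
  exact fun q => LieHom.congr_fun h q

end Main

/-- The framed Drinfeld–Kohno Lie algebra 𝔣𝔱ₙ is isomorphic to the Lie algebra of the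
spherical presentation (generators `t_{ij}`, `0 ≤ i, j ≤ n`, with symmetry, commuting
disjoint pairs, and the residue relations `Σ_{i=0}^n t_{ij} = 0`); the isomorphism is the
identity on the generators `t_{ij}` with `1 ≤ i, j ≤ n`, the residue relations eliminating
`t_{0j}`. -/
theorem ft_iso_spherical_presentation
    (k : Type) [Field k] [CharZero k] (n : ℕ) (hn : 1 ≤ n) :
    ∃ e : ft k n ≃ₗ⁅k⁆ sph k n,
      ∀ i j : ℕ, 1 ≤ i → i ≤ n → 1 ≤ j → j ≤ n →
        e (ftGen k n i j) = sphGen k n i j := by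
  refine ⟨{ Phi k n with
      invFun := Psi k n hn
      left_inv := left_inv' k n hn
      right_inv := right_inv' k n hn }, ?_⟩
  intro i j hi1 hi2 hj1 hj2
  show Phi k n (ftGen k n i j) = sphGen k n i j
  rw [Phi_gen, if_pos ⟨hi1, hi2, hj1, hj2⟩]
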